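/- Let T, L, P > 0, d_R, d_F ∈ ℕ with d_R, d_F ≥ 1, let v_R, v_F : [0,T] → ℝ_{>0}, and let (h,t,ρ) be a discretization with n ≥ 2, T = Σ_{j=1}^n h_j, t = Σ₊h, and ρ_j = 2LP h_j² for all j ∈ [1,n]. Write 𝓋(s) := v_R(s)·v_F(s). Then for every k ∈ [1,n−1], the quantity ΔC(h,t,ρ;k) := C(ψ[h,t,ρ;k]) − C(h,t,ρ) satisfies ΔC(h,t,ρ;k) = 𝓋(t_{k−1})·(2^{d_F}−1)·h_k^{d_F}/(ρ_{k−1}^{d_R} ρ_k^{d_F}) + 𝓋(t_k)·(4^{d_R}−1)·h_{k+1}^{d_F}/(ρ_k^{d_R} ρ_{k+1}^{d_F}) + 𝓋(t_k − h_k/2)·2^{d_F+2d_R}·h_k^{d_F}/(ρ_k^{d_F} ρ_k^{d_R}). -/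

import Mathlib

noncomputable section

/-- The local error term `𝓔_j(h,t,ρ)` of the Euler scheme error bound:
`𝓔_0 = e^{LT} ρ_0/2` and `𝓔_j = e^{L(T-t_j)}(e^{L h_j}-1)(P h_j + ρ_j/2 + ρ_j/(2 L h_j))`. -/
def calE (T L P : ℝ) (h t ρ : ℕ → ℝ) (j : ℕ) : ℝ :=
  if j = 0 then Real.exp (L * T) * ρ 0 / 2
  else Real.exp (L * (T - t j)) * (Real.exp (L * h j) - 1) *
    (P * h j + ρ j / 2 + ρ j / (2 * L * h j))

/-- The error bound `E(h,t,ρ) = ∑_{j=0}^n 𝓔_j(h,t,ρ)` for a discretization of length `n`. -/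
def Ebound (T L P : ℝ) (n : ℕ) (h t ρ : ℕ → ℝ) : ℝ :=
  ∑ j ∈ Finset.range (n + 1), calE T L P h t ρ j

/-- The `h`-component of the subdivision rule `ψ[h,t,ρ;k]`: for `k = 0` the step
sizes are unchanged, for `k ∈ [1,n]` the entry `h_k` is replaced by the two
entries `h_k/2, h_k/2` and later entries are shifted. -/
def psiH (h : ℕ → ℝ) (k : ℕ) : ℕ → ℝ := fun j =>
  if k = 0 then h j
  else if j < k then h j
  else if j ≤ k + 1 then h k / 2
  else h (j - 1)

/-- The `t`-component of the subdivision rule `ψ[h,t,ρ;k]`: for `k = 0` the nodes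
are unchanged, for `k ∈ [1,n]` the node `t_k - h_k/2` is inserted between
`t_{k-1}` and `t_k`. -/
def psiT (h t : ℕ → ℝ) (k : ℕ) : ℕ → ℝ := fun j =>
  if k = 0 then t j
  else if j < k then t j
  else if j = k then t k - h k / 2
  else t (j - 1)

/-- The `ρ`-component of the subdivision rule `ψ[h,t,ρ;k]`: for `k = 0` the entry
`ρ_0` is replaced by `ρ_0/4`, for `k ∈ [1,n]` the entry `ρ_k` is replaced by the
two entries `ρ_k/4, ρ_k/4` and later entries are shifted. -/
def psiRho (ρ : ℕ → ℝ) (k : ℕ) : ℕ → ℝ := fun j =>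
  if k = 0 then (if j = 0 then ρ 0 / 4 else ρ j)
  else if j < k then ρ j
  else if j ≤ k + 1 then ρ k / 4
  else ρ (j - 1)

/-- The length of the discretization produced by `ψ[h,t,ρ;k]` from one of length `n`:
`n` if `k = 0`, and `n + 1` otherwise. -/
def newn (n k : ℕ) : ℕ := if k = 0 then n else n + 1

/-- `ΔE(h,t,ρ;k) = E(ψ[h,t,ρ;k]) - E(h,t,ρ)`. -/
def deltaE (T L P : ℝ) (n : ℕ) (h t ρ : ℕ → ℝ) (k : ℕ) : ℝ :=
  Ebound T L P (newn n k) (psiH h k) (psiT h t k) (psiRho ρ k) - Ebound T L P n h t ρ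

/-- The cost estimator `C(h,t,ρ) = ∑_{j=0}^{n-1} (v_R(t_j)/ρ_j^{d_R}) ·
(v_F(t_j) h_{j+1}^{d_F} / ρ_{j+1}^{d_F})`. -/
def costC (dR dF : ℕ) (vR vF : ℝ → ℝ) (n : ℕ) (h t ρ : ℕ → ℝ) : ℝ :=
  ∑ j ∈ Finset.range n,
    (vR (t j) / ρ j ^ dR) * (vF (t j) * h (j + 1) ^ dF / ρ (j + 1) ^ dF)

/-- `ΔC(h,t,ρ;k) = C(ψ[h,t,ρ;k]) - C(h,t,ρ)`. -/
def deltaC (dR dF : ℕ) (vR vF : ℝ → ℝ) (n : ℕ) (h t ρ : ℕ → ℝ) (k : ℕ) : ℝ :=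
  costC dR dF vR vF (newn n k) (psiH h k) (psiT h t k) (psiRho ρ k) -
    costC dR dF vR vF n h t ρ

theorem stmt_7 (T L P : ℝ) (hT : 0 < T) (hL : 0 < L) (hP : 0 < P)
    (dR dF : ℕ) (hdR : 1 ≤ dR) (hdF : 1 ≤ dF)
    (vR vF : ℝ → ℝ)
    (hvR : ∀ s ∈ Set.Icc (0 : ℝ) T, 0 < vR s)
    (hvF : ∀ s ∈ Set.Icc (0 : ℝ) T, 0 < vF s)
    (n : ℕ) (hn : 2 ≤ n) (h t ρ : ℕ → ℝ)
    (hh : ∀ j, 1 ≤ j → j ≤ n → 0 < h j)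
    (htnn : ∀ j, j ≤ n → 0 ≤ t j)
    (hρ : ∀ j, j ≤ n → 0 < ρ j)
    (hsum : ∑ j ∈ Finset.Icc 1 n, h j = T)
    (hcum : ∀ k, k ≤ n → t k = ∑ j ∈ Finset.Icc 1 k, h j)
    (hcoup : ∀ j, 1 ≤ j → j ≤ n → ρ j = 2 * L * P * (h j) ^ 2) :
    ∀ k, 1 ≤ k → k < n →
      deltaC dR dF vR vF n h t ρ k =
        (vR (t (k - 1)) * vF (t (k - 1))) *
            (((2 : ℝ) ^ dF - 1) * h k ^ dF / (ρ (k - 1) ^ dR * ρ k ^ dF)) +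
          (vR (t k) * vF (t k)) *
            (((4 : ℝ) ^ dR - 1) * h (k + 1) ^ dF / (ρ k ^ dR * ρ (k + 1) ^ dF)) +
          (vR (t k - h k / 2) * vF (t k - h k / 2)) *
            ((2 : ℝ) ^ (dF + 2 * dR) * h k ^ dF / (ρ k ^ dF * ρ k ^ dR)) := by
  intro k hk1 hkn
  have hk0 : k ≠ 0 := by omega
  have Hh : ∀ j, psiH h k j =
      if j < k then h j else if j ≤ k + 1 then h k / 2 else h (j - 1) := by
    intro j; simp [psiH, hk0]
  have Ht : ∀ j, psiT h t k j =
      if j < k then t j else if j = k then t k - h k / 2 else t (j - 1) := by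
    intro j; simp [psiT, hk0]
  have Hρ : ∀ j, psiRho ρ k j =
      if j < k then ρ j else if j ≤ k + 1 then ρ k / 4 else ρ (j - 1) := by
    intro j; simp [psiRho, hk0]
  set Fn : ℕ → ℝ := fun j =>
    (vR (psiT h t k j) / psiRho ρ k j ^ dR) *
      (vF (psiT h t k j) * psiH h k (j + 1) ^ dF / psiRho ρ k (j + 1) ^ dF) with hFn
  set Fo : ℕ → ℝ := fun j =>
    (vR (t j) / ρ j ^ dR) * (vF (t j) * h (j + 1) ^ dF / ρ (j + 1) ^ dF) with hFo
  have hnewn : newn n k = n + 1 := by simp [newn, hk0]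
  have hΔ : deltaC dR dF vR vF n h t ρ k =
      ∑ j ∈ Finset.range (n + 1), Fn j - ∑ j ∈ Finset.range n, Fo j := by
    simp [deltaC, costC, hnewn, hFn, hFo]
  obtain ⟨m, rfl⟩ : ∃ m, k = m + 1 := ⟨k - 1, by omega⟩
  -- split the new sum
  have hsplitnew : ∑ j ∈ Finset.range (n + 1), Fn j
      = (∑ j ∈ Finset.range (m + 1), Fn j) + Fn (m + 1)
        + ∑ j ∈ Finset.Ico (m + 1) n, Fn (j + 1) := by
    rw [Finset.range_eq_Ico,
      ← Finset.sum_Ico_consecutive _ (Nat.zero_le (m + 1)) (by omega : m + 1 ≤ n + 1),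
      Finset.sum_eq_sum_Ico_succ_bot (by omega : m + 1 < n + 1),
      ← Finset.range_eq_Ico, ← add_assoc]
    congr 1
    rw [Finset.sum_Ico_eq_sum_range, Finset.sum_Ico_eq_sum_range]
    have h1 : n + 1 - (m + 1 + 1) = n - (m + 1) := by omega
    rw [h1]
    apply Finset.sum_congr rfl
    intro i _
    congr 1
    omega
  have hsplitold : ∑ j ∈ Finset.range n, Fo j
      = (∑ j ∈ Finset.range (m + 1), Fo j) + ∑ j ∈ Finset.Ico (m + 1) n, Fo j := by
    rw [Finset.range_eq_Ico,
      ← Finset.sum_Ico_consecutive _ (Nat.zero_le (m + 1)) (by omega : m + 1 ≤ n),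
      ← Finset.range_eq_Ico]
  -- pointwise equalities away from the modified indices
  have hA : ∀ j < m, Fn j = Fo j := by
    intro j hj
    have c1 : j < m + 1 := by omega
    have c2 : j + 1 < m + 1 := by omega
    simp only [hFn, hFo, Hh, Ht, Hρ, if_pos c1, if_pos c2]
  have hE : ∀ j, m + 1 < j → Fn (j + 1) = Fo j := by
    intro j hj
    have c1 : ¬ (j + 1 < m + 1) := by omega
    have c2 : ¬ (j + 1 = m + 1) := by omega
    have c3 : ¬ (j + 1 ≤ m + 1 + 1) := by omega
    have c4 : ¬ (j + 1 + 1 < m + 1) := by omega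
    have c5 : ¬ (j + 1 + 1 ≤ m + 1 + 1) := by omega
    have e1 : j + 1 - 1 = j := by omega
    have e2 : j + 1 + 1 - 1 = j + 1 := by omega
    simp only [hFn, hFo, Hh, Ht, Hρ, if_neg c1, if_neg c2, if_neg c3, if_neg c4,
      if_neg c5, e1, e2]
  have key : deltaC dR dF vR vF n h t ρ (m + 1) =
      (Fn m - Fo m) + Fn (m + 1) + (Fn (m + 2) - Fo (m + 1)) := by
    rw [hΔ, hsplitnew, hsplitold, Finset.sum_range_succ, Finset.sum_range_succ,
      Finset.sum_eq_sum_Ico_succ_bot (by omega : m + 1 < n),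
      Finset.sum_eq_sum_Ico_succ_bot (by omega : m + 1 < n)]
    have z1 : ∑ j ∈ Finset.range m, Fn j = ∑ j ∈ Finset.range m, Fo j :=
      Finset.sum_congr rfl fun j hj => hA j (Finset.mem_range.mp hj)
    have z2 : ∑ j ∈ Finset.Ico (m + 1 + 1) n, Fn (j + 1)
        = ∑ j ∈ Finset.Ico (m + 1 + 1) n, Fo j :=
      Finset.sum_congr rfl fun j hj => hE j (by
        have := Finset.mem_Ico.mp hj; omega)
    rw [z1, z2]
    ring
  -- nonvanishing denominators
  have hρm : ρ m ≠ 0 := ne_of_gt (hρ m (by omega))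
  have hρk : ρ (m + 1) ≠ 0 := ne_of_gt (hρ (m + 1) (by omega))
  have hρk1 : ρ (m + 2) ≠ 0 := ne_of_gt (hρ (m + 2) (by omega))
  have h2F : (2 : ℝ) ^ dF ≠ 0 := by positivity
  have h4F : (4 : ℝ) ^ dF ≠ 0 := by positivity
  have h4R : (4 : ℝ) ^ dR ≠ 0 := by positivity
  have e4F : (4 : ℝ) ^ dF = 2 ^ dF * 2 ^ dF := by rw [← mul_pow]; norm_num
  have e4R : (4 : ℝ) ^ dR = 2 ^ dR * 2 ^ dR := by rw [← mul_pow]; norm_num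
  have e2FR : (2 : ℝ) ^ (dF + 2 * dR) = 2 ^ dF * (2 ^ dR * 2 ^ dR) := by
    rw [pow_add, two_mul, pow_add]
  -- evaluate the three special terms
  have hB : Fn m - Fo m =
      (vR (t m) * vF (t m)) *
        ((2 : ℝ) ^ dF - 1) * h (m + 1) ^ dF / (ρ m ^ dR * ρ (m + 1) ^ dF) := by
    have c1 : m < m + 1 := by omega
    have c2 : ¬ (m + 1 < m + 1) := by omega
    have c3 : m + 1 ≤ m + 1 + 1 := by omega
    simp only [hFn, hFo, Hh, Ht, Hρ, if_pos c1, if_neg c2, if_pos c3]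
    rw [div_pow, div_pow]
    field_simp
    rw [e4F]
    ring
  have hC : Fn (m + 1) =
      (vR (t (m + 1) - h (m + 1) / 2) * vF (t (m + 1) - h (m + 1) / 2)) *
        (2 : ℝ) ^ (dF + 2 * dR) * h (m + 1) ^ dF /
          (ρ (m + 1) ^ dF * ρ (m + 1) ^ dR) := by
    have c1 : ¬ (m + 1 < m + 1) := by omega
    have c2 : m + 1 ≤ m + 1 + 1 := by omega
    have c3 : ¬ (m + 1 + 1 < m + 1) := by omega
    have c4 : m + 1 + 1 ≤ m + 1 + 1 := by omega
    have ceq : m + 1 = m + 1 := rfl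
    simp only [hFn, Hh, Ht, Hρ, if_neg c1, if_pos c2, if_neg c3, if_pos c4, if_pos ceq, if_true]
    rw [div_pow, div_pow, div_pow]
    field_simp
    rw [e2FR, e4F, e4R]
    ring
  have hD : Fn (m + 2) - Fo (m + 1) =
      (vR (t (m + 1)) * vF (t (m + 1))) *
        ((4 : ℝ) ^ dR - 1) * h (m + 2) ^ dF / (ρ (m + 1) ^ dR * ρ (m + 2) ^ dF) := by
    have c1 : ¬ (m + 2 < m + 1) := by omega
    have c2 : ¬ (m + 2 = m + 1) := by omega
    have c3 : m + 2 ≤ m + 1 + 1 := by omega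
    have c4 : ¬ (m + 2 + 1 < m + 1) := by omega
    have c5 : ¬ (m + 2 + 1 ≤ m + 1 + 1) := by omega
    have e1 : m + 2 - 1 = m + 1 := by omega
    have e2 : m + 2 + 1 - 1 = m + 2 := by omega
    simp only [hFn, hFo, Hh, Ht, Hρ, if_neg c1, if_neg c2, if_pos c3, if_neg c4,
      if_neg c5, e1, e2]
    rw [div_pow]
    field_simp
  have em : m + 1 - 1 = m := by omega
  rw [key, hB, hC, hD, em]
  ring
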